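/- For every integer d ≥ 1, the characteristic polynomial of the bricklayer's graph G_{2^d−1} evaluated at d satisfies χ_{2^d−1}(d) = d! · ∏_{i=1}^{d−1} (2i)^{binom(d,i) − 1}. -/

import Mathlib

/-- The bricklayer's graph `G_n`: vertices `0, …, n-1`, adjacent iff their binary
expansions differ in exactly one bit (i.e. their XOR is a power of two). -/
def bricklayerGraph (n : ℕ) : SimpleGraph (Fin n) where
  Adj u v := ∃ k : ℕ, (u.val ^^^ v.val) = 2 ^ k
  symm := by
    constructor
    rintro u v ⟨k, h⟩
    exact ⟨k, by rwa [Nat.xor_comm]⟩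
  loopless := by
    constructor
    rintro u ⟨k, h⟩
    rw [Nat.xor_self] at h
    exact (pow_ne_zero k (two_ne_zero)) h.symm

noncomputable instance (n : ℕ) : DecidableRel (bricklayerGraph n).Adj :=
  Classical.decRel _

/-- `λ_n`: the principal (largest) eigenvalue of the adjacency matrix of `G_n` over ℝ. -/
noncomputable def bricklayerLambda (n : ℕ) : ℝ :=
  sSup (spectrum ℝ ((bricklayerGraph n).adjMatrix ℝ))

/-- `χ_n`: the characteristic polynomial `det (x·I - A)` of the adjacency matrix of `G_n`. -/
noncomputable def bricklayerCharpoly (n : ℕ) : Polynomial ℝ :=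
  ((bricklayerGraph n).adjMatrix ℝ).charpoly

/-!
For `n = 2 ^ d` the graph `G_n` is the `d`-regular hypercube `Q_d`, so `L = d • 1 - A` is its
Laplacian and `χ_{n-1}(d)` is the principal minor of `L` at the last vertex (by the matrix-tree
theorem, the number of spanning trees of `Q_d`). With `E` the matrix unit at that vertex, the
minor is `det (L + E) - det L`. Writing `w j = bitWeight d j` for the number of ones in the
binary expansion of `j`, the Walsh–Hadamard matrix `H i j = (-1) ^ w (i &&& j)` satisfies
`H * H = 2 ^ d • 1` and `L * H = H * D` with `D = diagonal (2 * w j)`. Hence `H L H = 2 ^ d • D`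
is singular, while `H (L + E) H = 2 ^ d • D + vecMulVec u v` with `u 0 = v 0 = 1` has determinant
`∏_{j ≠ 0} 2 ^ d * 2 w j`. So `2 ^ d * χ_{n-1}(d) = ∏_{0 < j < 2 ^ d} 2 w j`, and grouping the
`j` by `w j` gives `∏_{i=1}^{d} (2 i) ^ (d.choose i)`.
-/

open Finset

def bitWeight (d j : ℕ) : ℕ := #{m ∈ range d | j.testBit m}

section Bits

variable {d j : ℕ}

lemma Nat.testBit_two_pow_add_self (h : j < 2 ^ d) : (2 ^ d + j).testBit d = true := by
  rw [Nat.testBit_two_pow_add_eq, Nat.testBit_lt_two_pow h, Bool.not_false]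

lemma Nat.eq_of_testBit_eq_of_lt_two_pow {i : ℕ} (hi : i < 2 ^ d) (hj : j < 2 ^ d)
    (h : ∀ m < d, i.testBit m = j.testBit m) : i = j := by
  refine Nat.eq_of_testBit_eq fun m => ?_
  rcases lt_or_ge m d with hm | hm
  · exact h m hm
  · rw [Nat.testBit_lt_two_pow (hi.trans_le (Nat.pow_le_pow_right two_pos hm)),
      Nat.testBit_lt_two_pow (hj.trans_le (Nat.pow_le_pow_right two_pos hm))]

lemma bitWeight_succ_of_lt (h : j < 2 ^ d) : bitWeight (d + 1) j = bitWeight d j := by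
  simp [bitWeight, range_add_one, filter_insert, Nat.testBit_lt_two_pow h]

lemma bitWeight_succ_two_pow_add (h : j < 2 ^ d) :
    bitWeight (d + 1) (2 ^ d + j) = bitWeight d j + 1 := by
  have hlow : {m ∈ range d | (2 ^ d + j).testBit m} = {m ∈ range d | j.testBit m} :=
    filter_congr fun m hm => by rw [Nat.testBit_two_pow_add_gt (mem_range.mp hm)]
  rw [bitWeight, range_add_one, filter_insert, if_pos (Nat.testBit_two_pow_add_self h), hlow,
    card_insert_of_notMem (by simp), bitWeight]

lemma bitWeight_ne_zero (h0 : j ≠ 0) (h : j < 2 ^ d) : bitWeight d j ≠ 0 := by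
  obtain ⟨m, hm⟩ := Nat.exists_testBit_of_ne_zero h0
  have hmd : m < d := by
    by_contra! hdm
    rw [Nat.testBit_lt_two_pow (h.trans_le (Nat.pow_le_pow_right two_pos hdm))] at hm
    exact Bool.false_ne_true hm
  exact (card_pos.mpr ⟨m, mem_filter.mpr ⟨mem_range.mpr hmd, hm⟩⟩).ne'

lemma sum_range_two_pow_prod_testBit {R : Type*} [CommSemiring R] (d : ℕ) (g : ℕ → Bool → R) :
    ∑ j ∈ range (2 ^ d), ∏ m ∈ range d, g m (j.testBit m)
      = ∏ m ∈ range d, (g m false + g m true) := by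
  induction d with
  | zero => simp
  | succ d ih =>
    have hlow : ∀ j ∈ range (2 ^ d), ∏ m ∈ range (d + 1), g m (j.testBit m)
        = (∏ m ∈ range d, g m (j.testBit m)) * g d false := fun j hj => by
      rw [prod_range_succ, Nat.testBit_lt_two_pow (mem_range.mp hj)]
    have hhigh : ∀ j ∈ range (2 ^ d), ∏ m ∈ range (d + 1), g m ((2 ^ d + j).testBit m)
        = (∏ m ∈ range d, g m (j.testBit m)) * g d true := fun j hj => by
      rw [prod_range_succ, Nat.testBit_two_pow_add_self (mem_range.mp hj)]
      congr 1
      exact prod_congr rfl fun m hm => by rw [Nat.testBit_two_pow_add_gt (mem_range.mp hm)]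
    rw [pow_succ, mul_two, sum_range_add, sum_congr rfl hlow, sum_congr rfl hhigh, ← sum_mul,
      ← sum_mul, ih, prod_range_succ, mul_add]

variable {M : Type*} [CommMonoid M]

lemma prod_range_pow_choose_succ (f : ℕ → M) (d : ℕ) :
    ∏ i ∈ range (d + 2), f i ^ (d + 1).choose i
      = (∏ i ∈ range (d + 1), f i ^ d.choose i) * ∏ i ∈ range (d + 1), f (i + 1) ^ d.choose i := by
  have hshift : ∏ i ∈ range (d + 1), f i ^ d.choose i
      = f 0 * ∏ i ∈ range (d + 1), f (i + 1) ^ d.choose (i + 1) := by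
    rw [prod_range_succ', prod_range_succ _ d, Nat.choose_succ_self, pow_zero, mul_one,
      Nat.choose_zero_right, pow_one, mul_comm]
  rw [prod_range_succ', hshift, Nat.choose_zero_right, pow_one, mul_assoc, ← prod_mul_distrib]
  simp only [Nat.choose_succ_succ', pow_add, mul_comm]

lemma prod_range_two_pow_bitWeight (f : ℕ → M) (d : ℕ) :
    ∏ j ∈ range (2 ^ d), f (bitWeight d j) = ∏ i ∈ range (d + 1), f i ^ d.choose i := by
  induction d generalizing f with
  | zero => simp [bitWeight]
  | succ d ih =>
    have hlow : ∏ j ∈ range (2 ^ d), f (bitWeight (d + 1) j)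
        = ∏ j ∈ range (2 ^ d), f (bitWeight d j) :=
      prod_congr rfl fun j hj => by rw [bitWeight_succ_of_lt (mem_range.mp hj)]
    have hhigh : ∏ j ∈ range (2 ^ d), f (bitWeight (d + 1) (2 ^ d + j))
        = ∏ j ∈ range (2 ^ d), f (bitWeight d j + 1) :=
      prod_congr rfl fun j hj => by rw [bitWeight_succ_two_pow_add (mem_range.mp hj)]
    rw [pow_succ, mul_two, prod_range_add, hlow, hhigh, ih, ih (fun i => f (i + 1)),
      prod_range_pow_choose_succ]

lemma prod_Ico_one_two_pow_bitWeight (f : ℕ → M) (d : ℕ) :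
    ∏ j ∈ Ico 1 (2 ^ d), f (bitWeight d j) = ∏ i ∈ Icc 1 d, f i ^ d.choose i := by
  obtain ⟨g, hg0, hgf⟩ : ∃ g : ℕ → M, g 0 = 1 ∧ ∀ i ≠ 0, g i = f i :=
    ⟨Function.update f 0 1, by simp, fun i hi => Function.update_of_ne hi _ _⟩
  calc ∏ j ∈ Ico 1 (2 ^ d), f (bitWeight d j) = ∏ j ∈ Ico 1 (2 ^ d), g (bitWeight d j) :=
        prod_congr rfl fun j hj => by
          rw [mem_Ico] at hj
          rw [hgf _ (bitWeight_ne_zero (by omega) hj.2)]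
    _ = ∏ j ∈ range (2 ^ d), g (bitWeight d j) := by
        rw [prod_range_eq_mul_Ico _ (Nat.two_pow_pos d)]
        simp [hg0, bitWeight]
    _ = ∏ i ∈ range (d + 1), g i ^ d.choose i := prod_range_two_pow_bitWeight g d
    _ = ∏ i ∈ Icc 1 d, f i ^ d.choose i := by
        rw [prod_range_eq_mul_Ico _ (Nat.zero_lt_succ d), hg0, one_pow, one_mul,
          Nat.succ_eq_add_one, Ico_add_one_right_eq_Icc]
        exact prod_congr rfl fun i hi => by rw [hgf _ (by grind)]

lemma prod_fin_bitWeight_succ {n : ℕ} (hn : n + 1 = 2 ^ d) (f : ℕ → M) :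
    ∏ i : Fin n, f (bitWeight d (i + 1)) = ∏ i ∈ Icc 1 d, f i ^ d.choose i := by
  rw [← prod_Ico_one_two_pow_bitWeight, prod_Ico_eq_prod_range, ← hn, Nat.add_sub_cancel,
    ← Fin.prod_univ_eq_prod_range]
  simp only [add_comm]

end Bits

lemma prod_Icc_two_mul_pow_choose {R : Type*} [CommSemiring R] (d : ℕ) :
    ∏ i ∈ Icc 1 d, (2 * i : R) ^ d.choose i
      = 2 ^ d * (d.factorial * ∏ i ∈ Icc 1 (d - 1), (2 * i : R) ^ (d.choose i - 1)) := by
  have hsplit : ∏ i ∈ Icc 1 d, (2 * i : R) ^ d.choose i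
      = (∏ i ∈ Icc 1 d, (2 * i : R)) * ∏ i ∈ Icc 1 d, (2 * i : R) ^ (d.choose i - 1) := by
    rw [← prod_mul_distrib]
    exact prod_congr rfl fun i hi =>
      (mul_pow_sub_one (Nat.choose_pos (mem_Icc.mp hi).2).ne' _).symm
  have htop : ∏ i ∈ Icc 1 d, (2 * i : R) ^ (d.choose i - 1)
      = ∏ i ∈ Icc 1 (d - 1), (2 * i : R) ^ (d.choose i - 1) := by
    rcases d with _ | d
    · rfl
    · rw [prod_Icc_succ_top (by omega), Nat.choose_self, Nat.sub_self, pow_zero, mul_one,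
        Nat.add_sub_cancel]
  rw [hsplit, htop, prod_mul_distrib, prod_const, Nat.card_Icc, Nat.add_sub_cancel, mul_assoc,
    ← Nat.cast_prod, ← Ico_add_one_right_eq_Icc, prod_Ico_id_eq_factorial]

namespace Matrix

variable {R : Type*} [CommRing R]

lemma mul_single_one_mul {m : Type*} [Fintype m] [DecidableEq m] (M N : Matrix m m R) (i j : m) :
    M * single i j 1 * N = vecMulVec (fun k => M k i) (N j) := by
  rw [single_eq_single_vecMulVec_single, mul_vecMulVec, vecMulVec_mul, mulVec_single_one,
    single_one_vecMul]
  rfl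

variable {n : ℕ}

lemma det_add_single_last_last (M : Matrix (Fin (n + 1)) (Fin (n + 1)) R) :
    (M + single (Fin.last n) (Fin.last n) 1).det
      = M.det + (M.submatrix Fin.castSucc Fin.castSucc).det := by
  have hrow : M + single (Fin.last n) (Fin.last n) 1
      = M.updateRow (Fin.last n) (M (Fin.last n) + Pi.single (Fin.last n) 1) := by
    ext i j
    by_cases hi : i = Fin.last n
    · subst hi
      simp [single_apply, Pi.single_apply, eq_comm]
    · simp [hi, Ne.symm hi]
  rw [hrow, det_updateRow_add, updateRow_eq_self, ← adjugate_apply,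
    adjugate_fin_succ_eq_det_submatrix, Fin.succAbove_last, ← two_mul, pow_mul, neg_one_sq,
    one_pow, one_mul]

lemma det_diagonal_add_vecMulVec_of_eq_zero (δ u w : Fin (n + 1) → R) (hδ : δ 0 = 0)
    (hu : u 0 = 1) : (diagonal δ + vecMulVec u w).det = w 0 * ∏ i : Fin n, δ i.succ := by
  set B : Matrix (Fin (n + 1)) (Fin (n + 1)) R :=
    of fun i j => if i = 0 then w j else diagonal δ i j
  -- Row `0` is `w`; subtracting `u i` times it from each row `i ≠ 0` leaves `B`.
  have hB : (diagonal δ + vecMulVec u w).det = B.det := by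
    refine det_eq_of_forall_row_eq_smul_add_const (fun i => if i = 0 then 0 else u i) 0
      (if_pos rfl) fun i j => ?_
    by_cases hi : i = 0
    · subst hi
      simp [B, hδ, hu, vecMulVec_apply, diagonal_apply]
    · simp [B, hi, vecMulVec_apply]
  have htri : B.IsUpperTriangular := fun i j hji => by
    have hi : i ≠ 0 := fun h => by simp [h] at hji
    have hij : i ≠ j := (ne_of_lt hji).symm
    simp [B, hi, hij]
  rw [hB, det_of_isUpperTriangular htri, Fin.prod_univ_succ]
  simp [B]

end Matrix

section Hypercube

open Matrix

variable {R : Type*} [CommRing R] {d n : ℕ}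

lemma bricklayerGraph_adj_castSucc {i j : Fin n} :
    (bricklayerGraph (n + 1)).Adj i.castSucc j.castSucc ↔ (bricklayerGraph n).Adj i j :=
  Iff.rfl

def flipBit (hn : n = 2 ^ d) (i : Fin n) (m : Fin d) : Fin n :=
  ⟨i ^^^ 2 ^ (m : ℕ), by
    subst hn
    exact Nat.xor_lt_two_pow i.isLt (Nat.pow_lt_pow_right one_lt_two m.isLt)⟩

lemma sum_neighborFinset_bricklayerGraph {A : Type*} [AddCommMonoid A] (hn : n = 2 ^ d)
    (i : Fin n) (f : Fin n → A) :
    ∑ u ∈ (bricklayerGraph n).neighborFinset i, f u = ∑ m : Fin d, f (flipBit hn i m) := by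
  symm
  refine sum_nbij (flipBit hn i) (fun m _ => ?_) (fun m _ m' _ h => ?_) (fun u hu => ?_)
    (fun _ _ => rfl)
  · rw [SimpleGraph.mem_neighborFinset]
    exact ⟨m, Nat.xor_xor_cancel_left _ _⟩
  · exact Fin.ext (Nat.pow_right_injective le_rfl (Nat.xor_right_inj.mp (congrArg Fin.val h)))
  · obtain ⟨k, hk⟩ := ((bricklayerGraph n).mem_neighborFinset i u).mp hu
    have hkd : k < d := (Nat.pow_lt_pow_iff_right one_lt_two).mp
      (hk ▸ Nat.xor_lt_two_pow (hn ▸ i.isLt) (hn ▸ u.isLt))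
    exact ⟨⟨k, hkd⟩, mem_coe.mpr (mem_univ _), Fin.ext ((xor_eq_iff_right_eq _ _ _).mp hk).symm⟩

variable (R) in
def walshMatrix (d n : ℕ) : Matrix (Fin n) (Fin n) R :=
  of fun i j => ∏ m ∈ range d, if (i : ℕ).testBit m && (j : ℕ).testBit m then -1 else 1

@[simp]
lemma walshMatrix_zero_apply (j : Fin (n + 1)) : walshMatrix R d (n + 1) 0 j = 1 := by
  simp [walshMatrix]

@[simp]
lemma walshMatrix_apply_zero (i : Fin (n + 1)) : walshMatrix R d (n + 1) i 0 = 1 := by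
  simp [walshMatrix]

lemma walshMatrix_flipBit_apply (hn : n = 2 ^ d) (i j : Fin n) (m : Fin d) :
    walshMatrix R d n (flipBit hn i m) j
      = (if (j : ℕ).testBit m then -1 else 1) * walshMatrix R d n i j := by
  have hfactor : ∀ k ∈ range d,
      (if ((i : ℕ) ^^^ 2 ^ (m : ℕ)).testBit k && (j : ℕ).testBit k then (-1 : R) else 1)
        = (if k = m then (if (j : ℕ).testBit m then -1 else 1) else 1)
          * (if (i : ℕ).testBit k && (j : ℕ).testBit k then -1 else 1) := fun k _ => by
    rw [Nat.testBit_xor, Nat.testBit_two_pow]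
    by_cases hk : k = m
    · subst hk
      cases (i : ℕ).testBit m <;> cases (j : ℕ).testBit m <;> simp
    · simp [hk, Ne.symm hk]
  simp only [walshMatrix, of_apply, flipBit]
  rw [prod_congr rfl hfactor, prod_mul_distrib, prod_ite_eq' (range d) (m : ℕ),
    if_pos (mem_range.mpr m.isLt)]

lemma walshMatrix_mul_self (hn : n = 2 ^ d) :
    walshMatrix R d n * walshMatrix R d n = (2 ^ d : R) • 1 := by
  subst hn
  ext i k
  set g : ℕ → Bool → R := fun m b =>
    (if (i : ℕ).testBit m && b then -1 else 1) * (if b && (k : ℕ).testBit m then -1 else 1)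
  have hprod : ∀ j : Fin (2 ^ d), walshMatrix R d (2 ^ d) i j * walshMatrix R d (2 ^ d) j k
      = ∏ m ∈ range d, g m ((j : ℕ).testBit m) := fun j => by
    simp only [walshMatrix, of_apply, g, prod_mul_distrib]
  rw [mul_apply, sum_congr rfl fun j _ => hprod j,
    Fin.sum_univ_eq_sum_range (fun j => ∏ m ∈ range d, g m (j.testBit m)),
    sum_range_two_pow_prod_testBit, Matrix.smul_apply, smul_eq_mul]
  by_cases hik : i = k
  · subst hik
    have h2 : ∀ m ∈ range d, g m false + g m true = 2 := fun m _ => by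
      cases h : (i : ℕ).testBit m <;> norm_num [g, h]
    rw [prod_congr rfl h2, prod_const, card_range, one_apply_eq, mul_one]
  · obtain ⟨m, hm, hne⟩ : ∃ m < d, (i : ℕ).testBit m ≠ (k : ℕ).testBit m := by
      by_contra! h
      exact hik (Fin.ext (Nat.eq_of_testBit_eq_of_lt_two_pow i.isLt k.isLt h))
    rw [one_apply_ne hik, mul_zero]
    refine prod_eq_zero (mem_range.mpr hm) ?_
    cases hi : (i : ℕ).testBit m <;> cases hk : (k : ℕ).testBit m <;> simp_all [g]

lemma sum_range_ite_testBit_neg_one (d j : ℕ) :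
    ∑ m ∈ range d, (if j.testBit m then (-1 : R) else 1) = d - 2 * bitWeight d j := by
  have hsign : ∀ m ∈ range d, (if j.testBit m then (-1 : R) else 1)
      = 1 - 2 * if j.testBit m then 1 else 0 := fun m _ => by split_ifs <;> ring
  rw [sum_congr rfl hsign, sum_sub_distrib, ← mul_sum, sum_boole, sum_const, card_range,
    nsmul_one, bitWeight]

lemma adjMatrix_mul_walshMatrix_apply (hn : n = 2 ^ d) (i j : Fin n) :
    ((bricklayerGraph n).adjMatrix R * walshMatrix R d n) i j
      = (d - 2 * bitWeight d j) * walshMatrix R d n i j := by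
  simp only [SimpleGraph.adjMatrix_mul_apply, sum_neighborFinset_bricklayerGraph hn,
    walshMatrix_flipBit_apply hn, ← sum_mul]
  rw [Fin.sum_univ_eq_sum_range (fun m => if (j : ℕ).testBit m then (-1 : R) else 1),
    sum_range_ite_testBit_neg_one]

lemma scalar_sub_adjMatrix_mul_walshMatrix (hn : n = 2 ^ d) :
    (scalar (Fin n) (d : R) - (bricklayerGraph n).adjMatrix R) * walshMatrix R d n
      = walshMatrix R d n * diagonal fun j : Fin n => 2 * (bitWeight d j : R) := by
  ext i j
  rw [sub_mul, Matrix.sub_apply, adjMatrix_mul_walshMatrix_apply hn, mul_diagonal, scalar_apply,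
    diagonal_mul]
  ring

lemma scalar_sub_adjMatrix_eq_submatrix (n : ℕ) (x : R) :
    scalar (Fin n) x - (bricklayerGraph n).adjMatrix R
      = (scalar (Fin (n + 1)) x - (bricklayerGraph (n + 1)).adjMatrix R).submatrix
          Fin.castSucc Fin.castSucc := by
  ext i j
  simp [diagonal_apply, bricklayerGraph_adj_castSucc]

theorem two_pow_mul_det_submatrix_scalar_sub_adjMatrix [IsDomain R] [CharZero R]
    (hn : n + 1 = 2 ^ d) :
    2 ^ d * ((scalar (Fin (n + 1)) (d : R) - (bricklayerGraph (n + 1)).adjMatrix R).submatrix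
        Fin.castSucc Fin.castSucc).det
      = ∏ i : Fin n, 2 * (bitWeight d (i + 1) : R) := by
  set L := scalar (Fin (n + 1)) (d : R) - (bricklayerGraph (n + 1)).adjMatrix R
  set H := walshMatrix R d (n + 1)
  have hHH : H.det * H.det = (2 ^ d) ^ n * 2 ^ d := by
    rw [← det_mul, walshMatrix_mul_self hn, det_smul, det_one, Fintype.card_fin, mul_one, pow_succ]
  have hHLH : H * L * H = diagonal fun j : Fin (n + 1) => 2 ^ d * (2 * (bitWeight d j : R)) := by
    rw [mul_assoc, scalar_sub_adjMatrix_mul_walshMatrix hn, ← mul_assoc, walshMatrix_mul_self hn,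
      smul_one_mul, ← diagonal_smul]
    rfl
  have hdetL : H.det * L.det * H.det = 0 := by
    rw [← det_mul, ← det_mul, hHLH, det_diagonal, Fin.prod_univ_succ]
    simp [bitWeight]
  have hdetLE : H.det * (L + single (Fin.last n) (Fin.last n) 1).det * H.det
      = (2 ^ d) ^ n * ∏ i : Fin n, 2 * (bitWeight d (i + 1) : R) := by
    rw [← det_mul, ← det_mul, mul_add, add_mul, hHLH, mul_single_one_mul,
      det_diagonal_add_vecMulVec_of_eq_zero _ _ _ (by simp [bitWeight]) (by simp [H])]
    simp [H, prod_mul_distrib]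
  rw [det_add_single_last_last, mul_add, add_mul, hdetL, zero_add] at hdetLE
  refine mul_left_cancel₀ (pow_ne_zero n (pow_ne_zero d (two_ne_zero' R))) ?_
  rw [← hdetLE, mul_right_comm, hHH]
  ring

end Hypercube

theorem bricklayer_charpoly_sub_one_eval_general (d : ℕ) :
    (bricklayerCharpoly (2 ^ d - 1)).eval (d : ℝ) =
      (d.factorial : ℝ) *
        ∏ i ∈ Finset.Icc 1 (d - 1), ((2 * i : ℝ)) ^ (d.choose i - 1) := by
  have hn : 2 ^ d - 1 + 1 = 2 ^ d := Nat.sub_add_cancel Nat.one_le_two_pow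
  have key := two_pow_mul_det_submatrix_scalar_sub_adjMatrix (R := ℝ) hn
  rw [prod_fin_bitWeight_succ hn (fun i => 2 * (i : ℝ)), prod_Icc_two_mul_pow_choose] at key
  rw [bricklayerCharpoly, Matrix.eval_charpoly, scalar_sub_adjMatrix_eq_submatrix]
  exact mul_left_cancel₀ (pow_ne_zero d two_ne_zero) key

/-- `χ_{2^d - 1}(d) = d! · ∏_{i=1}^{d-1} (2i)^{C(d,i) - 1}`. -/
theorem bricklayer_charpoly_sub_one_eval (d : ℕ) (hd : 1 ≤ d) :
    (bricklayerCharpoly (2 ^ d - 1)).eval (d : ℝ) =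
      (d.factorial : ℝ) *
        ∏ i ∈ Finset.Icc 1 (d - 1), ((2 * i : ℝ)) ^ (d.choose i - 1) :=
  bricklayer_charpoly_sub_one_eval_general d
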